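/- arXiv:2008.10687 — 8 statements merged into one kernel-verified Lean document; each statement's English description precedes it below -/
import Mathlib

section
/- Let h and h' be orientation-preserving homeomorphisms of the real line, let ξ ≥ 1 be a common Lipschitz constant for the four maps h, h', h⁻¹, (h')⁻¹, and let δ ≥ 0 be a common bound for their displacements, i.e. |h(x) − x| ≤ δ, |h'(x) − x| ≤ δ, |h⁻¹(x) − x| ≤ δ and |(h')⁻¹(x) − x| ≤ δ for every x ∈ ℝ. Then the displacement of the commutator [h, h'] = h ∘ h' ∘ h⁻¹ ∘ (h')⁻¹ is bounded by 2(ξ − 1)δ, i.e. for every x ∈ ℝ, |h(h'(h⁻¹((h')⁻¹(x)))) − x| ≤ 2(ξ − 1)δ. -/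
/-!
Write `z = h⁻¹ (h'⁻¹ x)`, so that `x = h' (h z)` and the displacement of the commutator at `x`
is `h (h' z) - h' (h z)`. This is the difference of two increments of displacement functions,
`(h - id)(h' z) - (h - id)(z)` and `(h' - id)(h z) - (h' - id)(z)`, taken over steps of length
at most `δ`. For an increasing bi-Lipschitz map with constant `ξ` the displacement `f - id` is
`(ξ - 1)`-Lipschitz, since the slopes of `f` lie in `[1/ξ, ξ]` and `1 - 1/ξ ≤ ξ - 1`.
-/

lemma le_mul_abs_sub_of_leftInverse {f g : ℝ → ℝ} {ξ : ℝ} (hgf : Function.LeftInverse g f)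
    (hg : ∀ a b : ℝ, |g a - g b| ≤ ξ * |a - b|) (a b : ℝ) :
    |a - b| ≤ ξ * |f a - f b| := by
  simpa only [hgf a, hgf b] using hg (f a) (f b)

lemma abs_sub_sub_sub_le_of_monotone {f : ℝ → ℝ} {ξ : ℝ} (hf : Monotone f) (hξ : 1 ≤ ξ)
    (hLip : ∀ a b : ℝ, |f a - f b| ≤ ξ * |a - b|)
    (hcoLip : ∀ a b : ℝ, |a - b| ≤ ξ * |f a - f b|) (a b : ℝ) :
    |(f a - a) - (f b - b)| ≤ (ξ - 1) * |a - b| := by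
  wlog hba : b ≤ a generalizing a b
  · rw [abs_sub_comm, abs_sub_comm a b]
    exact this b a (le_of_not_ge hba)
  have hfba : f b ≤ f a := hf hba
  have hup := hLip a b
  have hlow := hcoLip a b
  rw [abs_of_nonneg (sub_nonneg.2 hba), abs_of_nonneg (sub_nonneg.2 hfba)] at hup hlow
  rw [abs_of_nonneg (sub_nonneg.2 hba), abs_le]
  refine ⟨?_, by linarith⟩
  -- `ξ (f a - f b) ≥ a - b ≥ ξ (2 - ξ) (a - b)`, the second step being `(ξ - 1)² ≥ 0`
  have hscaled : 0 ≤ ξ * ((f a - f b) - (2 - ξ) * (a - b)) := by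
    nlinarith [mul_nonneg (sub_nonneg.2 hba) (sq_nonneg (ξ - 1))]
  have := nonneg_of_mul_nonneg_right hscaled (by linarith)
  linarith

theorem stmt_1_general (h h' hinv hinv' : ℝ → ℝ)
    (hmono : StrictMono h)
    (h'mono : StrictMono h')
    (hli : Function.LeftInverse hinv h) (hri : Function.RightInverse hinv h)
    (h'li : Function.LeftInverse hinv' h') (h'ri : Function.RightInverse hinv' h')
    (ξ δ : ℝ) (hξ : 1 ≤ ξ)
    (hLip : ∀ a b : ℝ, |h a - h b| ≤ ξ * |a - b|)
    (h'Lip : ∀ a b : ℝ, |h' a - h' b| ≤ ξ * |a - b|)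
    (hinvLip : ∀ a b : ℝ, |hinv a - hinv b| ≤ ξ * |a - b|)
    (hinv'Lip : ∀ a b : ℝ, |hinv' a - hinv' b| ≤ ξ * |a - b|)
    (hdisp : ∀ x : ℝ, |h x - x| ≤ δ)
    (h'disp : ∀ x : ℝ, |h' x - x| ≤ δ) :
    ∀ x : ℝ, |h (h' (hinv (hinv' x))) - x| ≤ 2 * (ξ - 1) * δ := by
  intro x
  set z := hinv (hinv' x)
  have hx : h' (h z) = x := by rw [hri, h'ri]
  have hξ1 : 0 ≤ ξ - 1 := sub_nonneg.2 hξ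
  have hstep := abs_sub_sub_sub_le_of_monotone hmono.monotone hξ hLip
    (le_mul_abs_sub_of_leftInverse hli hinvLip) (h' z) z
  have h'step := abs_sub_sub_sub_le_of_monotone h'mono.monotone hξ h'Lip
    (le_mul_abs_sub_of_leftInverse h'li hinv'Lip) (h z) z
  calc |h (h' z) - x|
      = |((h (h' z) - h' z) - (h z - z)) - ((h' (h z) - h z) - (h' z - z))| := by
        rw [← hx]; ring_nf
    _ ≤ |(h (h' z) - h' z) - (h z - z)| + |(h' (h z) - h z) - (h' z - z)| := abs_sub _ _
    _ ≤ (ξ - 1) * δ + (ξ - 1) * δ := by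
        gcongr
        · exact hstep.trans (mul_le_mul_of_nonneg_left (h'disp z) hξ1)
        · exact h'step.trans (mul_le_mul_of_nonneg_left (hdisp z) hξ1)
    _ = 2 * (ξ - 1) * δ := by ring

/-- If `h, h'` are orientation-preserving homeomorphisms of `ℝ`,
`ξ ≥ 1` is a common Lipschitz constant for `h, h', h⁻¹, (h')⁻¹`, and `δ ≥ 0` a common
bound for their displacements, then the displacement of the commutator
`[h, h'] = h ∘ h' ∘ h⁻¹ ∘ (h')⁻¹` is bounded by `2(ξ − 1)δ`. -/
theorem stmt_1 (h h' hinv hinv' : ℝ → ℝ)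
    (hmono : StrictMono h) (hbij : Function.Bijective h)
    (h'mono : StrictMono h') (h'bij : Function.Bijective h')
    (hli : Function.LeftInverse hinv h) (hri : Function.RightInverse hinv h)
    (h'li : Function.LeftInverse hinv' h') (h'ri : Function.RightInverse hinv' h')
    (ξ δ : ℝ) (hξ : 1 ≤ ξ) (hδ : 0 ≤ δ)
    (hLip : ∀ a b : ℝ, |h a - h b| ≤ ξ * |a - b|)
    (h'Lip : ∀ a b : ℝ, |h' a - h' b| ≤ ξ * |a - b|)
    (hinvLip : ∀ a b : ℝ, |hinv a - hinv b| ≤ ξ * |a - b|)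
    (hinv'Lip : ∀ a b : ℝ, |hinv' a - hinv' b| ≤ ξ * |a - b|)
    (hdisp : ∀ x : ℝ, |h x - x| ≤ δ)
    (h'disp : ∀ x : ℝ, |h' x - x| ≤ δ)
    (hinvdisp : ∀ x : ℝ, |hinv x - x| ≤ δ)
    (hinv'disp : ∀ x : ℝ, |hinv' x - x| ≤ δ) :
    ∀ x : ℝ, |h (h' (hinv (hinv' x))) - x| ≤ 2 * (ξ - 1) * δ :=
  stmt_1_general h h' hinv hinv' hmono h'mono hli hri h'li h'ri ξ δ hξ hLip h'Lip hinvLip hinv'Lip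
    hdisp h'disp
end

section
/- Let Z be a compact metrizable space, φ a continuous flow on Z, and let m₁, m₂, m₃ be Borel probability measures on Z. If m₁ can be L₁-transported along φ to m₂ and m₂ can be L₂-transported along φ to m₃ (with L₁, L₂ ≥ 0), then m₁ can be (L₁ + L₂)-transported along φ to m₃. -/
open MeasureTheory

/-- The set `Δ^L = {(x₁,x₂) : ∃ l ∈ [−L,L], x₂ = φ(l,x₁)}` associated to a flow `φ`. -/
def flowDelta {Z : Type*} [TopologicalSpace Z] (φ : Flow ℝ Z) (L : ℝ) : Set (Z × Z) :=
  {p : Z × Z | ∃ l ∈ Set.Icc (-L) L, p.2 = φ l p.1}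

/-- The topological support of a measure: points all of whose open neighborhoods
have positive measure. -/
def measureSupport {W : Type*} [TopologicalSpace W] [MeasurableSpace W]
    (M : Measure W) : Set W :=
  {x : W | ∀ U : Set W, IsOpen U → x ∈ U → M U ≠ 0}

/-- `m₁` can be `L`-transported along the flow `φ` to `m₂`: there is a Borel probability
measure `M` on `Z × Z` with topological support contained in `Δ^L`, whose first and
second marginals are `m₁` and `m₂` respectively. -/
def Transports {Z : Type*} [TopologicalSpace Z] [MeasurableSpace Z]
    (φ : Flow ℝ Z) (L : ℝ) (m₁ m₂ : Measure Z) : Prop :=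
  ∃ M : Measure (Z × Z), IsProbabilityMeasure M ∧
    measureSupport M ⊆ flowDelta φ L ∧
    M.map Prod.fst = m₁ ∧ M.map Prod.snd = m₂

/-!
Disintegrate the second coupling over its first marginal `m₂` and feed its conditional
kernel the middle coordinate of the first coupling. This glues the two couplings into one
measure on `Z × Z × Z`; its outer marginal couples `m₁` with `m₃` and is concentrated on
`Δ^{L₁} ○ Δ^{L₂} ⊆ Δ^{L₁+L₂}`, because `φ (l₂ + l₁) x = φ l₂ (φ l₁ x)`. On a second
countable space a measure has support in a closed set iff it is concentrated on that set,
so both hypotheses and the conclusion may be read almost everywhere.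
-/

open ProbabilityTheory SetRel

namespace MeasureTheory.Measure

variable {α β γ : Type*} {mα : MeasurableSpace α} {mβ : MeasurableSpace β}
  {mγ : MeasurableSpace γ}

lemma map_prodMap_compProd_comap (μ : Measure α) [SFinite μ] (κ : Kernel β γ)
    [IsSFiniteKernel κ] {f : α → β} (hf : Measurable f) :
    (μ ⊗ₘ κ.comap f hf).map (Prod.map f id) = μ.map f ⊗ₘ κ := by
  ext s hs
  rw [map_apply (hf.prodMap measurable_id) hs, compProd_apply (hf.prodMap measurable_id hs),
    compProd_apply hs, lintegral_map (Kernel.measurable_kernel_prodMk_left hs) hf]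
  rfl

lemma exists_fst_eq_map_eq_of_snd_eq_fst [StandardBorelSpace γ] (ρ₁ : Measure (α × β))
    (ρ₂ : Measure (β × γ)) [SFinite ρ₁] [IsFiniteMeasure ρ₂] (h : ρ₁.snd = ρ₂.fst) :
    ∃ P : Measure ((α × β) × γ), P.fst = ρ₁ ∧ P.map (fun p ↦ (p.1.2, p.2)) = ρ₂ := by
  cases isEmpty_or_nonempty γ
  · have hρ₂ : ρ₂ = 0 := eq_zero_of_isEmpty ρ₂
    have hρ₁ : ρ₁ = 0 := by
      rw [← measure_univ_eq_zero, ← snd_univ, h, hρ₂, fst_zero, coe_zero, Pi.zero_apply]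
    exact ⟨0, by simp [hρ₁], by simp [hρ₂]⟩
  · refine ⟨ρ₁ ⊗ₘ ρ₂.condKernel.comap Prod.snd measurable_snd, fst_compProd _ _, ?_⟩
    rw [show (fun p : (α × β) × γ ↦ (p.1.2, p.2)) = Prod.map Prod.snd id from rfl,
      map_prodMap_compProd_comap, ← snd, h, disintegrate]

lemma exists_fst_eq_snd_eq_ae_mem_of_comp_subset [StandardBorelSpace γ]
    (ρ₁ : Measure (α × β)) (ρ₂ : Measure (β × γ)) [SFinite ρ₁] [IsFiniteMeasure ρ₂]
    (h : ρ₁.snd = ρ₂.fst) {R : SetRel α β} {S : SetRel β γ} {T : SetRel α γ}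
    (hT : MeasurableSet T) (hRST : R ○ S ⊆ T) (hR : ∀ᵐ p ∂ρ₁, p ∈ R)
    (hS : ∀ᵐ p ∂ρ₂, p ∈ S) :
    ∃ ρ : Measure (α × γ), ρ.fst = ρ₁.fst ∧ ρ.snd = ρ₂.snd ∧ ∀ᵐ p ∂ρ, p ∈ T := by
  obtain ⟨P, hP₁, hP₂⟩ := exists_fst_eq_map_eq_of_snd_eq_fst ρ₁ ρ₂ h
  have hmeas : Measurable fun p : (α × β) × γ ↦ (p.1.1, p.2) := by fun_prop
  refine ⟨P.map fun p ↦ (p.1.1, p.2), ?_, ?_, ?_⟩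
  · rw [← hP₁]
    unfold fst
    rw [map_map measurable_fst hmeas, map_map measurable_fst measurable_fst]
    rfl
  · rw [← hP₂]
    unfold snd
    rw [map_map measurable_snd hmeas, map_map measurable_snd (by fun_prop)]
    rfl
  · have hPR : ∀ᵐ p ∂P, p.1 ∈ R :=
      ae_of_ae_map measurable_fst.aemeasurable (by rwa [← fst, hP₁])
    have hPS : ∀ᵐ p ∂P, (p.1.2, p.2) ∈ S := ae_of_ae_map (by fun_prop) (by rwa [hP₂])
    rw [ae_map_iff (p := (· ∈ T)) hmeas.aemeasurable hT]
    filter_upwards [hPR, hPS] with p hpR hpS using hRST ⟨p.1.2, hpR, hpS⟩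

end MeasureTheory.Measure

lemma measureSupport_eq_support {W : Type*} [TopologicalSpace W] [MeasurableSpace W]
    (M : Measure W) : measureSupport M = M.support := by
  simp [measureSupport, Measure.support_eq_forall_isOpen, pos_iff_ne_zero, imp.swap]

lemma measureSupport_subset_iff_ae {W : Type*} [TopologicalSpace W] [MeasurableSpace W]
    [HereditarilyLindelofSpace W] {M : Measure W} {F : Set W} (hF : IsClosed F) :
    measureSupport M ⊆ F ↔ ∀ᵐ p ∂M, p ∈ F := by
  rw [measureSupport_eq_support]
  exact ⟨fun h ↦ Filter.mem_of_superset Measure.support_mem_ae h,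
    Measure.support_subset_of_isClosed hF⟩

section Flow

variable {Z : Type*} [TopologicalSpace Z] (φ : Flow ℝ Z)

lemma isClosed_flowDelta [CompactSpace Z] [T2Space Z] (L : ℝ) : IsClosed (flowDelta φ L) := by
  have himg :
      flowDelta φ L = (fun q : ℝ × Z ↦ (q.2, φ q.1 q.2)) '' Set.Icc (-L) L ×ˢ Set.univ := by
    ext p
    constructor
    · rintro ⟨l, hl, hp⟩
      exact ⟨(l, p.1), ⟨hl, trivial⟩, Prod.ext rfl hp.symm⟩
    · rintro ⟨⟨l, x⟩, ⟨hl, -⟩, rfl⟩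
      exact ⟨l, hl, rfl⟩
  rw [himg]
  exact ((isCompact_Icc.prod isCompact_univ).image (continuous_snd.prodMk φ.cont')).isClosed

lemma flowDelta_comp_subset (L₁ L₂ : ℝ) :
    flowDelta φ L₁ ○ flowDelta φ L₂ ⊆ flowDelta φ (L₁ + L₂) := by
  rintro ⟨x, z⟩ ⟨y, ⟨l₁, hl₁, hy⟩, ⟨l₂, hl₂, hz⟩⟩
  dsimp only at hy hz
  subst hy hz
  exact ⟨l₂ + l₁, ⟨by linarith [hl₁.1, hl₂.1], by linarith [hl₁.2, hl₂.2]⟩,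
    (φ.map_add _ _ _).symm⟩

end Flow

theorem stmt_5_general {Z : Type*} [TopologicalSpace Z] [CompactSpace Z]
    [TopologicalSpace.MetrizableSpace Z] [MeasurableSpace Z] [BorelSpace Z]
    (φ : Flow ℝ Z) (L₁ L₂ : ℝ)
    (m₁ m₂ m₃ : Measure Z)
    (h12 : Transports φ L₁ m₁ m₂) (h23 : Transports φ L₂ m₂ m₃) :
    Transports φ (L₁ + L₂) m₁ m₃ := by
  let := TopologicalSpace.metrizableSpaceMetric Z
  obtain ⟨M₁, _, hM₁, rfl, rfl⟩ := h12
  obtain ⟨M₂, _, hM₂, hM₂fst, rfl⟩ := h23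
  rw [measureSupport_subset_iff_ae (isClosed_flowDelta φ _)] at hM₁ hM₂
  obtain ⟨M, hfst, hsnd, hM⟩ := Measure.exists_fst_eq_snd_eq_ae_mem_of_comp_subset M₁ M₂
    hM₂fst.symm (isClosed_flowDelta φ _).measurableSet (flowDelta_comp_subset φ L₁ L₂) hM₁ hM₂
  have : IsProbabilityMeasure M :=
    ⟨by rw [← Measure.fst_univ, hfst, Measure.fst_univ, measure_univ]⟩
  exact ⟨M, this, (measureSupport_subset_iff_ae (isClosed_flowDelta φ _)).2 hM, hfst, hsnd⟩

/-- transitivity of transport: if `m₁` can be `L₁`-transported along `φ`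
to `m₂` and `m₂` can be `L₂`-transported along `φ` to `m₃`, then `m₁` can be
`(L₁ + L₂)`-transported along `φ` to `m₃`. -/
theorem stmt_5 {Z : Type*} [TopologicalSpace Z] [CompactSpace Z]
    [TopologicalSpace.MetrizableSpace Z] [MeasurableSpace Z] [BorelSpace Z]
    (φ : Flow ℝ Z) (L₁ L₂ : ℝ) (hL₁ : 0 ≤ L₁) (hL₂ : 0 ≤ L₂)
    (m₁ m₂ m₃ : Measure Z) [IsProbabilityMeasure m₁] [IsProbabilityMeasure m₂]
    [IsProbabilityMeasure m₃]
    (h12 : Transports φ L₁ m₁ m₂) (h23 : Transports φ L₂ m₂ m₃) :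
    Transports φ (L₁ + L₂) m₁ m₃ :=
  stmt_5_general φ L₁ L₂ m₁ m₂ m₃ h12 h23
end

section
/- Let Z be a compact metrizable space, φ a continuous flow on Z, α > 0, and let T₀ ⊆ Z be a Borel set such that the map (s, τ) ↦ φ(s, τ) is injective on [0, α] × T₀. Let m be a φ-invariant Borel probability measure on Z. Then for all 0 ≤ a ≤ b ≤ α, m(φ([a, b] × T₀)) = ((b − a)/α) · m(φ([0, α] × T₀)). -/
/-!
Let `F(t) = m(φ([0,t] × T₀))`. Since `φ t` preserves `m` and shifts flow boxes in time,
`F(s + t) = F(s) + F(t)` as soon as the two boxes `φ([0,s] × T₀)` and `φ([s,s+t] × T₀)` overlap in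
a null set. They overlap exactly in the slice `φ s '' T₀`, which has the measure of `T₀`; and
`T₀` is null because the uncountably many slices `φ t '' T₀`, `t ∈ [0,α]`, are pairwise disjoint,
measurable and of equal measure. A monotone function additive on `[0,α]` is linear there.
-/

open MeasureTheory Set

section IntervalCauchyEquation

variable {f : ℝ → ℝ} {α : ℝ}

theorem map_natCast_mul_of_map_add
    (hadd : ∀ s t, 0 ≤ s → 0 ≤ t → s + t ≤ α → f (s + t) = f s + f t)
    (n : ℕ) {t : ℝ} (ht : 0 ≤ t) (hnt : n * t ≤ α) : f (n * t) = n * f t := by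
  induction n with
  | zero =>
    have h0 := hadd 0 0 le_rfl le_rfl (by simpa using hnt)
    simp only [Nat.cast_zero, zero_mul, add_zero] at h0 ⊢
    linarith
  | succ n ih =>
    have hn : (n : ℝ) * t ≤ α := le_trans (by gcongr; simp) hnt
    push_cast at hnt ⊢
    rw [add_mul, one_mul, hadd _ _ (by positivity) ht (by linarith), ih hn]
    ring

theorem div_sub_mul_le_of_monotoneOn_of_map_add (hα : 0 < α) (hmono : MonotoneOn f (Icc 0 α))
    (hadd : ∀ s t, 0 ≤ s → 0 ≤ t → s + t ≤ α → f (s + t) = f s + f t)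
    (N : ℕ) {x : ℝ} (hx : x ∈ Icc 0 α) : (x / α - 1 / (N + 1)) * f α ≤ f x := by
  set k := ⌊(N + 1) * x / α⌋₊
  have hN : (0 : ℝ) < N + 1 := by positivity
  have hxk : (N + 1) * x / α < k + 1 := Nat.lt_floor_add_one _
  have hkx : (k : ℝ) * (α / (N + 1)) ≤ x :=
    calc (k : ℝ) * (α / (N + 1)) ≤ (N + 1) * x / α * (α / (N + 1)) := by
          gcongr; exact Nat.floor_le (by have := hx.1; positivity)
      _ = x := by field_simp
  have hf0 : f 0 = 0 := by
    simpa using map_natCast_mul_of_map_add hadd 0 le_rfl (by simpa using hα.le)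
  have hfα : 0 ≤ f α := hf0 ▸ hmono ⟨le_rfl, hα.le⟩ ⟨hα.le, le_rfl⟩ hα.le
  have hfα_eq : f α = (N + 1) * f (α / (N + 1)) := by
    have h := map_natCast_mul_of_map_add hadd (N + 1) (t := α / (N + 1)) (by positivity)
      (by push_cast; field_simp; rfl)
    push_cast at h
    rwa [mul_div_cancel₀ _ hN.ne'] at h
  calc (x / α - 1 / (N + 1)) * f α ≤ k / (N + 1) * f α := by
        gcongr
        rw [div_lt_iff₀ hα] at hxk
        rw [sub_le_iff_le_add, ← add_div, div_le_div_iff₀ hα hN]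
        linarith
    _ = f (k * (α / (N + 1))) := by
        rw [map_natCast_mul_of_map_add hadd k (by positivity) (hkx.trans hx.2), hfα_eq]
        field_simp
    _ ≤ f x := hmono ⟨by positivity, hkx.trans hx.2⟩ hx hkx

theorem eq_div_mul_of_monotoneOn_of_map_add (hα : 0 < α) (hmono : MonotoneOn f (Icc 0 α))
    (hadd : ∀ s t, 0 ≤ s → 0 ≤ t → s + t ≤ α → f (s + t) = f s + f t)
    {x : ℝ} (hx : x ∈ Icc 0 α) : f x = x / α * f α := by
  have lower : ∀ y ∈ Icc 0 α, y / α * f α ≤ f y := fun y hy =>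
    le_of_tendsto'
      (by simpa using ((tendsto_one_div_add_atTop_nhds_zero_nat (𝕜 := ℝ)).const_sub
        (y / α)).mul_const (f α))
      fun N => div_sub_mul_le_of_monotoneOn_of_map_add hα hmono hadd N hy
  have hsum : f α = f x + f (α - x) := by
    simpa using hadd x (α - x) hx.1 (by linarith [hx.2]) (by linarith)
  have hx' := lower x hx
  have hαx := lower (α - x) ⟨by linarith [hx.2], by linarith [hx.1]⟩
  have : (α - x) / α * f α = f α - x / α * f α := by field_simp
  linarith

end IntervalCauchyEquation

namespace Flow

variable {τ Z : Type*} [TopologicalSpace τ] [TopologicalSpace Z]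

def box [AddMonoid τ] (φ : Flow τ Z) (I : Set τ) (T : Set Z) : Set Z :=
  (fun p : τ × Z => φ p.1 p.2) '' (I ×ˢ T)

theorem box_singleton [AddMonoid τ] (φ : Flow τ Z) (t : τ) (T : Set Z) :
    φ.box {t} T = φ t '' T := by
  rw [box, singleton_prod, image_image]

theorem image_box [AddMonoid τ] (φ : Flow τ Z) (t : τ) (I : Set τ) (T : Set Z) :
    φ t '' φ.box I T = φ.box ((t + ·) '' I) T := by
  simp only [box, image_prod, image_image2, image2_image_left, map_add]

theorem measurableSet_box [AddMonoid τ] [PolishSpace τ] [MeasurableSpace τ] [BorelSpace τ]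
    [PolishSpace Z] [MeasurableSpace Z] [BorelSpace Z] (φ : Flow τ Z) {I : Set τ} {T : Set Z}
    (hI : MeasurableSet I) (hT : MeasurableSet T)
    (hinj : InjOn (fun p : τ × Z => φ p.1 p.2) (I ×ˢ T)) : MeasurableSet (φ.box I T) :=
  (hI.prod hT).image_of_continuousOn_injOn
    (φ.continuous continuous_fst continuous_snd).continuousOn hinj

variable [AddGroup τ] [MeasurableSpace Z] [BorelSpace Z] {m : Measure Z}

theorem measure_image (φ : Flow τ Z) (hm : ∀ t, m.map (φ t) = m) (t : τ) (A : Set Z) :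
    m (φ t '' A) = m A := by
  rw [image_eq_preimage_symm]
  exact MeasurePreserving.measure_preimage_equiv
    (f := (φ.toHomeomorph (-t)).toMeasurableEquiv)
    ⟨(φ.continuous_toFun _).measurable, hm (-t)⟩ A

/-- The slices `φ t '' T`, `t ∈ I`, are disjoint, measurable and all of measure `m T`; only
countably many of them can have positive measure. -/
theorem measure_eq_zero_of_injOn [SFinite m] (φ : Flow τ Z) (hm : ∀ t, m.map (φ t) = m)
    {I : Set τ} (hI : ¬ I.Countable) {T : Set Z} (hT : MeasurableSet T)
    (hinj : InjOn (fun p : τ × Z => φ p.1 p.2) (I ×ˢ T)) : m T = 0 := by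
  by_contra hpos
  let slice : I → Set Z := fun t => φ t '' T
  have hmeas : ∀ t, MeasurableSet (slice t) := fun t =>
    (φ.toHomeomorph t).toMeasurableEquiv.measurableSet_image.2 hT
  have hdisj : Pairwise fun s t => Disjoint (slice s) (slice t) := by
    rintro ⟨s, hs⟩ ⟨t, ht⟩ hst
    refine disjoint_left.2 ?_
    rintro _ ⟨x, hx, rfl⟩ ⟨y, hy, hxy⟩
    have hyx : ((t, y) : τ × Z) = (s, x) := hinj ⟨ht, hy⟩ ⟨hs, hx⟩ hxy
    exact hst (Subtype.ext (congrArg Prod.fst hyx).symm)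
  have hcount := Measure.countable_meas_pos_of_disjoint_iUnion (μ := m) hmeas hdisj
  simp only [slice, φ.measure_image hm, pos_iff_ne_zero.2 hpos, ofPred_true,
    countable_univ_iff, countable_coe_iff] at hcount
  exact hI hcount

theorem measure_box_Icc_const_add (φ : Flow ℝ Z) (hm : ∀ t, m.map (φ t) = m)
    (t a b : ℝ) (T : Set Z) : m (φ.box (Icc (t + a) (t + b)) T) = m (φ.box (Icc a b) T) := by
  rw [← image_const_add_Icc, ← image_box, measure_image φ hm]

/-- Two adjacent flow boxes meet in the slice `φ v '' T`, which is null together with `T`. -/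
theorem measure_box_Icc_eq_add [PolishSpace Z] (φ : Flow ℝ Z) (hm : ∀ t, m.map (φ t) = m)
    {T : Set Z} (hT : MeasurableSet T) (hnull : m T = 0) {u v w : ℝ} (huv : u ≤ v) (hvw : v ≤ w)
    (hinj : InjOn (fun p : ℝ × Z => φ p.1 p.2) (Icc u w ×ˢ T)) :
    m (φ.box (Icc u w) T) = m (φ.box (Icc u v) T) + m (φ.box (Icc v w) T) := by
  have hleft : Icc u v ×ˢ T ⊆ Icc u w ×ˢ T := prod_mono_left (Icc_subset_Icc_right hvw)
  have hright : Icc v w ×ˢ T ⊆ Icc u w ×ˢ T := prod_mono_left (Icc_subset_Icc_left huv)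
  have hunion : φ.box (Icc u v) T ∪ φ.box (Icc v w) T = φ.box (Icc u w) T := by
    rw [box, box, box, ← image_union, ← union_prod, Icc_union_Icc_eq_Icc huv hvw]
  have hinter : φ.box (Icc u v) T ∩ φ.box (Icc v w) T = φ v '' T := by
    rw [box, box, ← hinj.image_inter hleft hright, prod_inter_prod, Icc_inter_Icc,
      max_eq_right huv, min_eq_left hvw, Icc_self, inter_self, ← box, box_singleton]
  have hinclExcl := measure_union_add_inter (μ := m) (φ.box (Icc u v) T)
    (φ.measurableSet_box measurableSet_Icc hT (hinj.mono hright))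
  rwa [hunion, hinter, measure_image φ hm, hnull, add_zero] at hinclExcl

end Flow

/-- invariant measures are proportional to length in flow boxes:
let `φ` be a continuous flow on a compact metrizable space `Z`, `α > 0`, and let `T₀` be a
Borel set such that `(s,τ) ↦ φ(s,τ)` is injective on `[0,α] × T₀`. If `m` is a
`φ`-invariant Borel probability measure, then for all `0 ≤ a ≤ b ≤ α`,
`m(φ([a,b] × T₀)) = ((b−a)/α)·m(φ([0,α] × T₀))`. -/
theorem stmt_9 {Z : Type*} [TopologicalSpace Z] [CompactSpace Z]
    [TopologicalSpace.MetrizableSpace Z] [MeasurableSpace Z] [BorelSpace Z]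
    (φ : Flow ℝ Z) (α : ℝ) (hα : 0 < α)
    (T₀ : Set Z) (hT₀ : MeasurableSet T₀)
    (hinj : Set.InjOn (fun p : ℝ × Z => φ p.1 p.2) (Set.Icc 0 α ×ˢ T₀))
    (m : Measure Z) [IsProbabilityMeasure m]
    (hminv : ∀ t : ℝ, m.map (fun z => φ t z) = m)
    (a b : ℝ) (ha : 0 ≤ a) (hab : a ≤ b) (hb : b ≤ α) :
    (m ((fun p : ℝ × Z => φ p.1 p.2) '' (Set.Icc a b ×ˢ T₀))).toReal =
      ((b - a) / α) * (m ((fun p : ℝ × Z => φ p.1 p.2) '' (Set.Icc 0 α ×ˢ T₀))).toReal := by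
  have : PolishSpace Z := by
    let := TopologicalSpace.metrizableSpaceMetric Z
    infer_instance
  have hnull : m T₀ = 0 :=
    φ.measure_eq_zero_of_injOn hminv (by simpa using hα) hT₀ hinj
  set F : ℝ → ℝ := fun t => (m (φ.box (Icc 0 t) T₀)).toReal
  have hmono : MonotoneOn F (Icc 0 α) := fun s _ t _ hst =>
    ENNReal.toReal_mono (measure_ne_top _ _)
      (measure_mono (image_mono (prod_mono_left (Icc_subset_Icc_right hst))))
  have hadd : ∀ s t, 0 ≤ s → 0 ≤ t → s + t ≤ α → F (s + t) = F s + F t := by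
    intro s t hs ht hst
    have hsplit := φ.measure_box_Icc_eq_add hminv hT₀ hnull hs (by linarith)
      (hinj.mono (prod_mono_left (Icc_subset_Icc_right hst)))
    have hshift := φ.measure_box_Icc_const_add hminv s 0 t T₀
    rw [add_zero] at hshift
    simp only [F, hsplit, hshift, ENNReal.toReal_add (measure_ne_top _ _) (measure_ne_top _ _)]
  have hlen : m (φ.box (Icc a b) T₀) = m (φ.box (Icc 0 (b - a)) T₀) := by
    simpa using φ.measure_box_Icc_const_add hminv a 0 (b - a) T₀
  change (m (φ.box (Icc a b) T₀)).toReal = _ * F α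
  rw [hlen]
  exact eq_div_mul_of_monotoneOn_of_map_add hα hmono hadd ⟨sub_nonneg.2 hab, by linarith⟩
end

section
/- Let G be a locally compact, second-countable Hausdorff topological group, K a compact subgroup of G, and m_K the Haar probability measure of K (viewed as a measure on G supported on K). Let L be a subgroup of G such that every g ∈ G can be written g = σ_L(g)·σ_K(g) for Borel measurable maps σ_L : G → G and σ_K : G → G with σ_L(g) ∈ L and σ_K(g) ∈ K for all g. Let m_G be a Borel probability measure on G that is right K-invariant, i.e. the pushforward of m_G under right multiplication by any k ∈ K equals m_G. Let f : G → ℝ be a bounded Borel function that is left L-invariant, i.e. f(l·g) = f(g) for all l ∈ L and g ∈ G. Define F : G → ℝ by F(g) := ∫_K f(k·g) dm_K(k). Then F is left m_G-harmonic: for every g ∈ G, ∫_G F(h·g) dm_G(h) = F(g). -/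
/-!
Right `K`-invariance of `m_G` together with `m_K(Kᶜ) = 0` gives
`∫ F(h g) dm_G(h) = ∫∫ F(h k g) dm_K(k) dm_G(h)`. For fixed `h`, exchanging the two
`m_K`-integrals gives `∫ F(h k g) dm_K(k) = ∫∫ f(k' h k g) dm_K(k) dm_K(k')`; writing
`k' h = l c` with `l ∈ L`, `c ∈ K`, left `L`-invariance of `f` and left `K`-invariance of `m_K`
turn the inner integral into `F(g)`. Boundedness of `f` justifies both uses of Fubini.
-/

open MeasureTheory Function

section

variable {G E : Type*} [Group G] [MeasurableSpace G] [NormedAddCommGroup E] [NormedSpace ℝ E]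

theorem integral_comp_mul_left_of_map_eq [MeasurableMul G] {μ : Measure G} {c : G}
    (hμ : μ.map (fun x => c * x) = μ) (φ : G → E) :
    ∫ x, φ (c * x) ∂μ = ∫ x, φ x ∂μ :=
  MeasurePreserving.integral_comp' (f := MeasurableEquiv.mulLeft c)
    ⟨measurable_const_mul c, hμ⟩ φ

theorem integral_comp_mul_right_of_map_eq [MeasurableMul G] {μ : Measure G} {c : G}
    (hμ : μ.map (fun x => x * c) = μ) (φ : G → E) :
    ∫ x, φ (x * c) ∂μ = ∫ x, φ x ∂μ :=
  MeasurePreserving.integral_comp' (f := MeasurableEquiv.mulRight c)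
    ⟨measurable_mul_const c, hμ⟩ φ

theorem integral_integral_swap_of_abs_le {α β : Type*}
    [MeasurableSpace α] [MeasurableSpace β]
    {μ : Measure α} {ν : Measure β} [IsFiniteMeasure μ] [IsFiniteMeasure ν]
    {φ : α → β → ℝ} (hφ : Measurable (uncurry φ)) {C : ℝ} (hC : ∀ x y, |φ x y| ≤ C) :
    ∫ x, ∫ y, φ x y ∂ν ∂μ = ∫ y, ∫ x, φ x y ∂μ ∂ν :=
  integral_integral_swap <| .of_bound hφ.aestronglyMeasurable C <|
    .of_forall fun p => hC p.1 p.2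

theorem measurable_integral_comp_mul [MeasurableMul₂ G] {μ : Measure G} [SFinite μ]
    {f : G → ℝ} (hf : Measurable f) : Measurable fun g => ∫ k, f (k * g) ∂μ :=
  (hf.comp (measurable_snd.mul measurable_fst)).stronglyMeasurable
    |>.integral_prod_right' |>.measurable

theorem abs_integral_comp_mul_le {μ : Measure G} [IsProbabilityMeasure μ]
    {f : G → ℝ} {C : ℝ} (hf : ∀ g, |f g| ≤ C) (g : G) : |∫ k, f (k * g) ∂μ| ≤ C := by
  simpa using norm_integral_le_of_norm_le_const (μ := μ)
    (.of_forall fun k => (Real.norm_eq_abs _).trans_le (hf (k * g)))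

theorem integral_comp_mul_mul_eq_of_mul_eq_univ [MeasurableMul G]
    {K L : Set G} {μ : Measure G} (hμ : ∀ c ∈ K, μ.map (fun x => c * x) = μ)
    (hLK : ∀ y, ∃ l ∈ L, ∃ c ∈ K, y = l * c)
    {f : G → ℝ} (hf : ∀ l ∈ L, ∀ g, f (l * g) = f g) (y g : G) :
    ∫ k, f (y * (k * g)) ∂μ = ∫ k, f (k * g) ∂μ := by
  obtain ⟨l, hl, c, hc, rfl⟩ := hLK y
  simp_rw [mul_assoc l, hf l hl, ← mul_assoc c]
  exact integral_comp_mul_left_of_map_eq (hμ c hc) (fun x => f (x * g))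

theorem integral_integral_comp_mul_of_map_eq [MeasurableMul G] [CompleteSpace E]
    {K : Set G} {μ ν : Measure G} [IsProbabilityMeasure ν] (hν : ν Kᶜ = 0)
    (hμ : ∀ k ∈ K, μ.map (fun x => x * k) = μ) (φ : G → E) :
    ∫ k, ∫ h, φ (h * k) ∂μ ∂ν = ∫ h, φ h ∂μ := by
  have hK : ∀ᵐ k ∂ν, k ∈ K := ae_iff.mpr hν
  rw [integral_congr_ae (hK.mono fun k hk => integral_comp_mul_right_of_map_eq (hμ k hk) φ),
    integral_const, probReal_univ, one_smul]

theorem integral_integral_comp_mul_mul_eq_of_mul_eq_univ [MeasurableMul₂ G]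
    {K L : Set G} {μ : Measure G} [IsProbabilityMeasure μ]
    (hμ : ∀ c ∈ K, μ.map (fun x => c * x) = μ) (hLK : ∀ y, ∃ l ∈ L, ∃ c ∈ K, y = l * c)
    {f : G → ℝ} (hfL : ∀ l ∈ L, ∀ g, f (l * g) = f g) (hf : Measurable f)
    {C : ℝ} (hfC : ∀ g, |f g| ≤ C) (x g : G) :
    ∫ k', ∫ k, f (k * (x * k' * g)) ∂μ ∂μ = ∫ k, f (k * g) ∂μ := by
  rw [integral_integral_swap_of_abs_le (by fun_prop) fun _ _ => hfC _]
  simp_rw [mul_assoc x, ← mul_assoc _ x,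
    integral_comp_mul_mul_eq_of_mul_eq_univ hμ hLK hfL, integral_const, probReal_univ, one_smul]

end

theorem stmt_10_general {G : Type*} [Group G] [TopologicalSpace G] [IsTopologicalGroup G]
    [SecondCountableTopology G]
    [MeasurableSpace G] [BorelSpace G]
    (K L : Subgroup G)
    (m_K : Measure G) [IsProbabilityMeasure m_K]
    (hKsupp : m_K ((K : Set G)ᶜ) = 0)
    (hKleft : ∀ k ∈ K, m_K.map (fun g => k * g) = m_K)
    (σL σK : G → G)
    (hdecomp : ∀ g : G, σL g ∈ L ∧ σK g ∈ K ∧ g = σL g * σK g)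
    (m_G : Measure G) [IsProbabilityMeasure m_G]
    (hmG : ∀ k ∈ K, m_G.map (fun g => g * k) = m_G)
    (f : G → ℝ) (hf : Measurable f) (C : ℝ) (hfbdd : ∀ g, |f g| ≤ C)
    (hfinv : ∀ l ∈ L, ∀ g, f (l * g) = f g) :
    ∀ g : G, (∫ h, (∫ k, f (k * (h * g)) ∂m_K) ∂m_G) = ∫ k, f (k * g) ∂m_K := by
  intro g
  have hLK : ∀ y, ∃ l ∈ L, ∃ c ∈ K, y = l * c := fun y =>
    ⟨σL y, (hdecomp y).1, σK y, (hdecomp y).2.1, (hdecomp y).2.2⟩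
  have hF : Measurable fun x => ∫ k, f (k * x) ∂m_K := measurable_integral_comp_mul hf
  calc ∫ h, ∫ k, f (k * (h * g)) ∂m_K ∂m_G
      = ∫ k', ∫ h, ∫ k, f (k * (h * k' * g)) ∂m_K ∂m_G ∂m_K :=
        (integral_integral_comp_mul_of_map_eq hKsupp hmG fun h =>
          ∫ k, f (k * (h * g)) ∂m_K).symm
    _ = ∫ h, ∫ k', ∫ k, f (k * (h * k' * g)) ∂m_K ∂m_K ∂m_G :=
        integral_integral_swap_of_abs_le (hF.comp (by fun_prop))
          fun _ _ => abs_integral_comp_mul_le hfbdd _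
    _ = ∫ k, f (k * g) ∂m_K := by
        simp [integral_integral_comp_mul_mul_eq_of_mul_eq_univ hKleft hLK hfinv hf hfbdd]

/-- Lemma on harmonicity of `K`-averages of left `L`-invariant
functions: let `G` be a locally compact second-countable Hausdorff topological group,
`K` a compact subgroup with Haar probability measure `m_K` (viewed as a measure on `G`
supported on `K`), and `L` a subgroup such that `G = LK` with Borel measurable section
maps `σ_L, σ_K`. If `m_G` is a right `K`-invariant Borel probability measure on `G` and
`f : G → ℝ` is a bounded Borel function which is left `L`-invariant, then
`F(g) := ∫_K f(k·g) dm_K(k)` is left `m_G`-harmonic: `∫ F(h·g) dm_G(h) = F(g)`. -/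
theorem stmt_10 {G : Type*} [Group G] [TopologicalSpace G] [IsTopologicalGroup G]
    [LocallyCompactSpace G] [SecondCountableTopology G] [T2Space G]
    [MeasurableSpace G] [BorelSpace G]
    (K L : Subgroup G) (hKcomp : IsCompact (K : Set G))
    (m_K : Measure G) [IsProbabilityMeasure m_K]
    (hKsupp : m_K ((K : Set G)ᶜ) = 0)
    (hKleft : ∀ k ∈ K, m_K.map (fun g => k * g) = m_K)
    (hKright : ∀ k ∈ K, m_K.map (fun g => g * k) = m_K)
    (σL σK : G → G) (hσL : Measurable σL) (hσK : Measurable σK)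
    (hdecomp : ∀ g : G, σL g ∈ L ∧ σK g ∈ K ∧ g = σL g * σK g)
    (m_G : Measure G) [IsProbabilityMeasure m_G]
    (hmG : ∀ k ∈ K, m_G.map (fun g => g * k) = m_G)
    (f : G → ℝ) (hf : Measurable f) (C : ℝ) (hfbdd : ∀ g, |f g| ≤ C)
    (hfinv : ∀ l ∈ L, ∀ g, f (l * g) = f g) :
    ∀ g : G, (∫ h, (∫ k, f (k * (h * g)) ∂m_K) ∂m_G) = ∫ k, f (k * g) ∂m_K :=
  stmt_10_general K L m_K hKsupp hKleft σL σK hdecomp m_G hmG f hf C hfbdd hfinv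
end

section
/- Let Γ be a group with a finite symmetric generating set S containing the identity, let l_S denote the word length on Γ with respect to S, and let m_Γ be a symmetric probability measure on Γ (m_Γ(γ) = m_Γ(γ⁻¹)) satisfying the second-moment condition Σ_{γ∈Γ} l_S(γ)² · m_Γ(γ) < ∞. Fix constants ξ ≥ 1 and δ, Δ > 0. Consider the set 𝒟 of tuples (f_γ)_{γ∈S} of continuous maps ℝ → ℝ for which there exists a group homomorphism ρ from Γ to the group of strictly increasing bijections of ℝ with ρ(γ) = f_γ for every γ ∈ S, satisfying: (1) |ρ(γ)(x) − x| ≤ Δ for every γ ∈ S and every x ∈ ℝ; (2) Σ_{γ∈Γ} (ρ(γ)(x) − x)² · m_Γ(γ) ≥ δ² for every x ∈ ℝ; (3) ρ(γ) is ξ-Lipschitz for every γ ∈ S; (4) Σ_{γ∈Γ} ρ(γ)(x) · m_Γ(γ) = x for every x ∈ ℝ. Then 𝒟 is a compact subset of the space C(ℝ, ℝ)^S of S-indexed tuples of continuous self-maps of ℝ with the product of compact-open topologies. -/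
/-!
By Arzelà–Ascoli, the continuous maps of `ℝ` with displacement at most `Δ` that are
`ξ`-Lipschitz form a compact subset of `C(ℝ, ℝ)`, so it suffices to prove closedness. If the
restrictions to `S` of actions `ρₙ` converge, then, since `S` generates `Γ` as a monoid and
composition is jointly continuous for the compact-open topology, `ρₙ γ` converges for every `γ`,
and the limits again form an action by increasing homeomorphisms. Conditions (1) and (3) are
closed under pointwise limits. For (2) and (4), the bound `|ρₙ γ x - x| ≤ Δ · l_S(γ)`, uniform in
`n`, combined with the second moment of `m` gives a summable dominating function, so the sums
pass to the limit by dominated convergence.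
-/

/-- The word length of `γ` with respect to a generating set `S`: the least `n` such that
`γ` is a product of `n` elements of `S` (`0` for the identity). -/
noncomputable def wordLength {Γ : Type*} [Group Γ] (S : Set Γ) (γ : Γ) : ℕ :=
  sInf {n : ℕ | ∃ f : Fin n → Γ, (∀ i, f i ∈ S) ∧ γ = (List.ofFn f).prod}

open Filter Topology Set

section WordLength

variable {Γ : Type*} [Group Γ] {S : Set Γ}

theorem submonoidClosure_eq_top_of_inv_mem (hS : ∀ γ ∈ S, γ⁻¹ ∈ S)
    (hgen : Subgroup.closure S = ⊤) : Submonoid.closure S = ⊤ := by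
  have hSinv : S ∪ S⁻¹ = S := union_eq_left.2 fun γ hγ => by simpa using hS _ hγ
  rw [← hSinv, ← Subgroup.closure_toSubmonoid, hgen, Subgroup.top_toSubmonoid]

theorem exists_list_prod_eq_length_eq_wordLength (hS : Submonoid.closure S = ⊤) (γ : Γ) :
    ∃ L : List Γ, (∀ s ∈ L, s ∈ S) ∧ L.prod = γ ∧ L.length = wordLength S γ := by
  obtain ⟨L, hLS, hLγ⟩ := Submonoid.exists_list_of_mem_closure (hS ▸ Submonoid.mem_top γ)
  have hne : {n : ℕ | ∃ f : Fin n → Γ, (∀ i, f i ∈ S) ∧ γ = (List.ofFn f).prod}.Nonempty :=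
    ⟨L.length, L.get, fun i => hLS _ (L.get_mem i), by rw [List.ofFn_get, hLγ]⟩
  obtain ⟨f, hfS, hfγ⟩ := Nat.sInf_mem hne
  exact ⟨List.ofFn f, by simpa [List.mem_ofFn] using hfS, hfγ.symm, List.length_ofFn⟩

end WordLength

theorem abs_apply_list_prod_sub_le {M : Type*} [Monoid M] (ρ : M →* (ℝ ≃o ℝ)) {S : Set M}
    {Δ : ℝ} (hΔ : ∀ s ∈ S, ∀ x, |ρ s x - x| ≤ Δ) :
    ∀ L : List M, (∀ s ∈ L, s ∈ S) → ∀ x, |ρ L.prod x - x| ≤ Δ * L.length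
  | [], _, x => by simp
  | s :: L, hL, x => by
    have hs := hΔ s (hL s List.mem_cons_self) (ρ L.prod x)
    have ih := abs_apply_list_prod_sub_le ρ hΔ L (fun t ht => hL t (List.mem_cons_of_mem _ ht)) x
    calc |ρ (s :: L).prod x - x|
        ≤ |ρ s (ρ L.prod x) - ρ L.prod x| + |ρ L.prod x - x| := by
          rw [List.prod_cons, map_mul]; exact abs_sub_le _ _ _
      _ ≤ Δ * (s :: L).length := by push_cast [List.length_cons]; linarith

theorem abs_apply_sub_le_mul_wordLength {Γ : Type*} [Group Γ] {S : Set Γ}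
    (hS : Submonoid.closure S = ⊤) (ρ : Γ →* (ℝ ≃o ℝ)) {Δ : ℝ}
    (hΔ : ∀ s ∈ S, ∀ x, |ρ s x - x| ≤ Δ) (γ : Γ) (x : ℝ) :
    |ρ γ x - x| ≤ Δ * wordLength S γ := by
  obtain ⟨L, hLS, rfl, hlen⟩ := exists_list_prod_eq_length_eq_wordLength hS γ
  simpa [hlen] using abs_apply_list_prod_sub_le ρ hΔ L hLS x

theorem isCompact_setOf_abs_sub_le_of_lipschitz (Δ : ℝ) {ξ : ℝ} (hξ : 0 ≤ ξ) :
    IsCompact {g : C(ℝ, ℝ) | (∀ x, |g x - x| ≤ Δ) ∧ ∀ x y, |g x - g y| ≤ ξ * |x - y|} := by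
  set Q : Set (ℝ → ℝ) := {g | (∀ x, |g x - x| ≤ Δ) ∧ ∀ x y, |g x - g y| ≤ ξ * |x - y|}
  have hlip : ∀ g ∈ Q, LipschitzWith ⟨ξ, hξ⟩ g := fun g hg =>
    LipschitzWith.of_dist_le_mul fun x y => hg.2 x y
  apply ArzelaAscoli.isCompact_of_equicontinuous
  · have himage : ContinuousMap.toFun '' {g : C(ℝ, ℝ) | g.toFun ∈ Q} = Q :=
      Subset.antisymm (image_subset_iff.2 fun _ hg => hg)
        fun g hg => ⟨⟨g, (hlip g hg).continuous⟩, hg, rfl⟩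
    have hQbox : Q ⊆ univ.pi fun x => Icc (x - Δ) (x + Δ) := fun g hg x _ => by
      have := abs_sub_le_iff.1 (hg.1 x)
      constructor <;> linarith
    have hQclosed : IsClosed Q := by
      simp only [Q, ofPred_and, ofPred_forall]
      refine (isClosed_iInter fun x => ?_).inter
        (isClosed_iInter fun x => isClosed_iInter fun y => ?_)
      · exact isClosed_le ((continuous_apply x).sub continuous_const).abs continuous_const
      · exact isClosed_le ((continuous_apply x).sub (continuous_apply y)).abs continuous_const
    exact himage ▸ (isCompact_univ_pi fun x => isCompact_Icc).of_isClosed_subset hQclosed hQbox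
  · exact (LipschitzWith.uniformEquicontinuous _ _ fun g => hlip _ g.2).equicontinuous

section Limits

variable {ι : Type*} {l : Filter ι}

theorem coe_map_mul_eq_comp {M : Type*} [Monoid M] (ρ : M →* (ℝ ≃o ℝ)) (a b : M) :
    (ρ (a * b) : C(ℝ, ℝ)) = (ρ a : C(ℝ, ℝ)).comp (ρ b) := by
  ext x
  simp

theorem exists_tendsto_of_tendsto_generators {M : Type*} [Monoid M] {S : Set M}
    (hS : Submonoid.closure S = ⊤) (ρ : ι → M →* (ℝ ≃o ℝ))
    (hconv : ∀ s ∈ S, ∃ g : C(ℝ, ℝ), Tendsto (fun i => (ρ i s : C(ℝ, ℝ))) l (𝓝 g)) (γ : M) :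
    ∃ g : C(ℝ, ℝ), Tendsto (fun i => (ρ i γ : C(ℝ, ℝ))) l (𝓝 g) := by
  induction (hS ▸ Submonoid.mem_top γ : γ ∈ Submonoid.closure S)
    using Submonoid.closure_induction with
  | mem s hs => exact hconv s hs
  | one => exact ⟨ContinuousMap.id ℝ, tendsto_const_nhds.congr fun i => by ext x; simp⟩
  | mul a b _ _ ha hb =>
    obtain ⟨ga, hga⟩ := ha
    obtain ⟨gb, hgb⟩ := hb
    exact ⟨_, (hga.compCM hgb).congr fun i => (coe_map_mul_eq_comp (ρ i) a b).symm⟩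

theorem exists_monoidHom_of_tendsto {Γ : Type*} [Group Γ] [l.NeBot] (ρ : ι → Γ →* (ℝ ≃o ℝ))
    {g : Γ → C(ℝ, ℝ)} (hg : ∀ γ, Tendsto (fun i => (ρ i γ : C(ℝ, ℝ))) l (𝓝 (g γ))) :
    ∃ ρ' : Γ →* (ℝ ≃o ℝ), ∀ γ, (ρ' γ : C(ℝ, ℝ)) = g γ := by
  have hmul : ∀ a b, g (a * b) = (g a).comp (g b) := fun a b =>
    tendsto_nhds_unique (hg (a * b)) <|
      ((hg a).compCM (hg b)).congr fun i => (coe_map_mul_eq_comp (ρ i) a b).symm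
  have hone : g 1 = ContinuousMap.id ℝ :=
    tendsto_nhds_unique (hg 1) <| tendsto_const_nhds.congr fun i => by ext x; simp
  have hinv : ∀ γ x, g γ (g γ⁻¹ x) = x := fun γ x => by
    rw [← ContinuousMap.comp_apply, ← hmul, mul_inv_cancel, hone, ContinuousMap.id_apply]
  have hmono : ∀ γ, Monotone (g γ) := fun γ x y hxy =>
    le_of_tendsto_of_tendsto' (((continuous_eval_const x).tendsto _).comp (hg γ))
      (((continuous_eval_const y).tendsto _).comp (hg γ)) fun i => (ρ i γ).monotone hxy
  let e : Γ → ℝ ≃o ℝ := fun γ =>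
    Equiv.toOrderIso ⟨g γ, g γ⁻¹, fun x => by simpa using hinv γ⁻¹ x, hinv γ⟩ (hmono γ) (hmono γ⁻¹)
  exact ⟨MonoidHom.mk' e fun a b => by ext x; exact DFunLike.congr_fun (hmul a b) x,
    fun γ => rfl⟩

end Limits

section HarmonicActions

variable {Γ : Type*} [Group Γ]

def IsNormalizedHarmonicAction (S : Set Γ) (m : Γ → ℝ) (ξ δ Δ : ℝ) (ρ : Γ →* (ℝ ≃o ℝ)) :
    Prop :=
  (∀ γ ∈ S, ∀ x, |ρ γ x - x| ≤ Δ) ∧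
  (∀ x, δ ^ 2 ≤ ∑' γ, (ρ γ x - x) ^ 2 * m γ) ∧
  (∀ γ ∈ S, ∀ x y, |ρ γ x - ρ γ y| ≤ ξ * |x - y|) ∧
  (∀ x, ∑' γ, ρ γ x * m γ = x)

theorem summable_mul_of_summable_sq_mul {α : Type*} {a m : α → ℝ} (hm0 : ∀ i, 0 ≤ m i)
    (hm : Summable m) (ha : Summable fun i => a i ^ 2 * m i) : Summable fun i => a i * m i := by
  refine (hm.add ha).of_norm_bounded fun i => ?_
  have : |a i| ≤ 1 + a i ^ 2 := by nlinarith [sq_abs (a i), abs_nonneg (a i)]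
  rw [Real.norm_eq_abs, abs_mul, abs_of_nonneg (hm0 i)]
  nlinarith [hm0 i]

theorem tendsto_tsum_mul_of_abs_le {ι α : Type*} {l : Filter ι} {F : ι → α → ℝ} {G B m : α → ℝ}
    (hm0 : ∀ a, 0 ≤ m a) (hB : Summable fun a => B a * m a)
    (hF : ∀ a, Tendsto (F · a) l (𝓝 (G a))) (hFB : ∀ i a, |F i a| ≤ B a) :
    Tendsto (fun i => ∑' a, F i a * m a) l (𝓝 (∑' a, G a * m a)) :=
  tendsto_tsum_of_dominated_convergence hB (fun a => (hF a).mul_const (m a)) <|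
    .of_forall fun i a => by
      rw [Real.norm_eq_abs, abs_mul, abs_of_nonneg (hm0 a)]
      exact mul_le_mul_of_nonneg_right (hFB i a) (hm0 a)

theorem IsNormalizedHarmonicAction.of_tendsto {ι : Type*} {l : Filter ι} [l.NeBot] {S : Set Γ}
    (hS : Submonoid.closure S = ⊤) {m : Γ → ℝ} (hm0 : ∀ γ, 0 ≤ m γ) (hm : Summable m)
    (hmoment : Summable fun γ => (wordLength S γ : ℝ) ^ 2 * m γ) {ξ δ Δ : ℝ}
    {ρ : ι → Γ →* (ℝ ≃o ℝ)} (hρ : ∀ i, IsNormalizedHarmonicAction S m ξ δ Δ (ρ i))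
    {ρ' : Γ →* (ℝ ≃o ℝ)} (hlim : ∀ γ x, Tendsto (fun i => ρ i γ x) l (𝓝 (ρ' γ x))) :
    IsNormalizedHarmonicAction S m ξ δ Δ ρ' := by
  have hdisp : ∀ i γ x, |ρ i γ x - x| ≤ Δ * wordLength S γ := fun i =>
    abs_apply_sub_le_mul_wordLength hS (ρ i) (hρ i).1
  refine ⟨fun γ hγ x => ?_, fun x => ?_, fun γ hγ x y => ?_, fun x => ?_⟩
  · exact le_of_tendsto ((hlim γ x).sub_const x).abs (.of_forall fun i => (hρ i).1 γ hγ x)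
  · refine ge_of_tendsto (tendsto_tsum_mul_of_abs_le (B := fun γ => Δ ^ 2 * wordLength S γ ^ 2)
      hm0 ?_ (fun γ => ((hlim γ x).sub_const x).pow 2) fun i γ => ?_)
      (.of_forall fun i => (hρ i).2.1 x)
    · simpa only [mul_assoc] using hmoment.mul_left (Δ ^ 2)
    · rw [abs_of_nonneg (sq_nonneg _), ← mul_pow, sq_le_sq]
      exact (hdisp i γ x).trans (le_abs_self _)
  · exact le_of_tendsto ((hlim γ x).sub (hlim γ y)).abs (.of_forall fun i => (hρ i).2.2.1 γ hγ x y)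
  · have hsum : Summable fun γ => (|x| + Δ * wordLength S γ) * m γ := by
      simpa only [add_mul, mul_assoc] using (hm.mul_left |x|).add
        ((summable_mul_of_summable_sq_mul hm0 hm hmoment).mul_left Δ)
    have hconv := tendsto_tsum_mul_of_abs_le hm0 hsum (hlim · x) fun i γ =>
      calc |ρ i γ x| = |x + (ρ i γ x - x)| := by rw [add_sub_cancel]
        _ ≤ |x| + Δ * wordLength S γ := (abs_add_le _ _).trans (by linarith [hdisp i γ x])
    exact tendsto_nhds_unique (hconv.congr fun i => (hρ i).2.2.2 x) tendsto_const_nhds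

theorem isClosed_setOf_restrict_isNormalizedHarmonicAction (S : Finset Γ)
    (hS : Submonoid.closure (S : Set Γ) = ⊤) {m : Γ → ℝ} (hm0 : ∀ γ, 0 ≤ m γ) (hm : Summable m)
    (hmoment : Summable fun γ => (wordLength (S : Set Γ) γ : ℝ) ^ 2 * m γ) (ξ δ Δ : ℝ) :
    IsClosed {f : S → C(ℝ, ℝ) | ∃ ρ : Γ →* (ℝ ≃o ℝ), (∀ γ : S, ∀ x, ρ (γ : Γ) x = f γ x) ∧
      IsNormalizedHarmonicAction S m ξ δ Δ ρ} := by
  refine IsSeqClosed.isClosed fun fs f hfs hlim => ?_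
  choose ρ hρf hρ using hfs
  have hgen : ∀ s : S, Tendsto (fun n => (ρ n s : C(ℝ, ℝ))) atTop (𝓝 (f s)) := fun s =>
    (tendsto_pi_nhds.1 hlim s).congr fun n => (ContinuousMap.ext (hρf n s)).symm
  choose g hg using exists_tendsto_of_tendsto_generators hS ρ fun s hs => ⟨_, hgen ⟨s, hs⟩⟩
  obtain ⟨ρ', hρ'⟩ := exists_monoidHom_of_tendsto ρ hg
  have hpointwise : ∀ γ x, Tendsto (fun n => ρ n γ x) atTop (𝓝 (ρ' γ x)) := fun γ x => by
    have := ((continuous_eval_const x).tendsto _).comp (hg γ)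
    rwa [← hρ'] at this
  refine ⟨ρ', fun s x => ?_, .of_tendsto hS hm0 hm hmoment hρ hpointwise⟩
  rw [← tendsto_nhds_unique (hg s) (hgen s), ← hρ']
  rfl

end HarmonicActions

theorem stmt_11_general {Γ : Type*} [Group Γ] (S : Finset Γ)
    (hSsymm : ∀ γ ∈ S, γ⁻¹ ∈ S)
    (hSgen : Subgroup.closure (S : Set Γ) = ⊤)
    (m : Γ → ℝ) (hm0 : ∀ γ, 0 ≤ m γ)
    (hm1 : HasSum m 1)
    (hmoment : Summable fun γ => (wordLength (S : Set Γ) γ : ℝ) ^ 2 * m γ)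
    (ξ : ℝ) (hξ : 1 ≤ ξ) (δ Δ : ℝ) :
    IsCompact {f : S → C(ℝ, ℝ) |
      ∃ ρ : Γ →* (ℝ ≃o ℝ),
        (∀ γ : S, ∀ x : ℝ, ρ (γ : Γ) x = f γ x) ∧
        (∀ γ ∈ S, ∀ x : ℝ, |ρ γ x - x| ≤ Δ) ∧
        (∀ x : ℝ, δ ^ 2 ≤ ∑' γ : Γ, (ρ γ x - x) ^ 2 * m γ) ∧
        (∀ γ ∈ S, ∀ x y : ℝ, |ρ γ x - ρ γ y| ≤ ξ * |x - y|) ∧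
        (∀ x : ℝ, ∑' γ : Γ, (ρ γ x) * m γ = x)} := by
  have hS : Submonoid.closure (S : Set Γ) = ⊤ := submonoidClosure_eq_top_of_inv_mem hSsymm hSgen
  have hbox := isCompact_univ_pi fun _ : S =>
    isCompact_setOf_abs_sub_le_of_lipschitz Δ (zero_le_one.trans hξ)
  refine hbox.of_isClosed_subset
    (isClosed_setOf_restrict_isNormalizedHarmonicAction S hS hm0 hm1.summable hmoment ξ δ Δ) ?_
  rintro f ⟨ρ, hρf, hdisp, -, hlip, -⟩ s -
  exact ⟨fun x => hρf s x ▸ hdisp s s.2 x, fun x y => hρf s x ▸ hρf s y ▸ hlip s s.2 x y⟩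

/-- compactness of the space of normalized harmonic actions: let `Γ` be
a group with a finite symmetric generating set `S` containing the identity, let `m` be a
symmetric probability distribution on `Γ` with finite second moment with respect to the
word length `l_S`, and fix `ξ ≥ 1`, `δ, Δ > 0`. The set of tuples `(f_γ)_{γ∈S}` of
continuous self-maps of `ℝ` coming from a homomorphism `ρ` of `Γ` into the group of
strictly increasing bijections (order automorphisms) of `ℝ` satisfying
(1) bounded displacement from above, (2) bounded displacement from below,
(3) Lipschitz regularity, and (4) harmonicity,
is a compact subset of `C(ℝ,ℝ)^S` with the product of compact-open topologies. -/
theorem stmt_11 {Γ : Type*} [Group Γ] (S : Finset Γ)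
    (hS1 : (1 : Γ) ∈ S) (hSsymm : ∀ γ ∈ S, γ⁻¹ ∈ S)
    (hSgen : Subgroup.closure (S : Set Γ) = ⊤)
    (m : Γ → ℝ) (hm0 : ∀ γ, 0 ≤ m γ) (hmsymm : ∀ γ, m γ⁻¹ = m γ)
    (hm1 : HasSum m 1)
    (hmoment : Summable fun γ => (wordLength (S : Set Γ) γ : ℝ) ^ 2 * m γ)
    (ξ : ℝ) (hξ : 1 ≤ ξ) (δ Δ : ℝ) (hδ : 0 < δ) (hΔ : 0 < Δ) :
    IsCompact {f : S → C(ℝ, ℝ) |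
      ∃ ρ : Γ →* (ℝ ≃o ℝ),
        (∀ γ : S, ∀ x : ℝ, ρ (γ : Γ) x = f γ x) ∧
        (∀ γ ∈ S, ∀ x : ℝ, |ρ γ x - x| ≤ Δ) ∧
        (∀ x : ℝ, δ ^ 2 ≤ ∑' γ : Γ, (ρ γ x - x) ^ 2 * m γ) ∧
        (∀ γ ∈ S, ∀ x y : ℝ, |ρ γ x - ρ γ y| ≤ ξ * |x - y|) ∧
        (∀ x : ℝ, ∑' γ : Γ, (ρ γ x) * m γ = x)} :=
  stmt_11_general S hSsymm hSgen m hm0 hm1 hmoment ξ hξ δ Δ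
end

section
/- Let ι be a nonempty finite index type, A a normed ring, λ : ι → ι → ℝ and λ₀ > 0 such that λ(α, β) ≥ λ₀ for all α, β and λ(α, γ) ≤ λ(α, β) + λ(β, γ) for all α, β, γ. Let C ≥ 0 and let (E_n)_{n ≥ 1} be a sequence of ι × ι matrices with entries in A such that ‖(E_n)_{α,β}‖ ≤ C·exp(−n·λ(α, β)) for all n ≥ 1 and all α, β. For n ≥ 1 and k ≥ 0 define the matrix F_{n,k} by 1 + F_{n,k} = (1 + E_n)(1 + E_{n+1})⋯(1 + E_{n+k}), where 1 denotes the identity matrix. Then there exists a constant C' ≥ 0, independent of n and k, such that ‖(F_{n,k})_{α,β}‖ ≤ C'·exp(−n·λ(α, β)) for all n ≥ 1, all k ≥ 0 and all α, β. -/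
/-!
Measure a matrix `M` at level `t ≥ 0` by the least `c` with `‖M α β‖ ≤ c · exp(-t λ(α, β))`
for all entries. The triangle inequality for `λ` makes this weighted size submultiplicative up
to the factor `|ι|`, so, as for a non-unital normed algebra, `∏ (1 + X_j) - 1` has size at most
`∏ (1 + |ι| c_j) - 1` when `X_j` has size `c_j`. At level `n`, the matrix `E_{n+j}` has size
`C q^j` with `q = exp(-λ₀) < 1`, because `λ ≥ λ₀`; the product `∏ (1 + |ι| C q^j)` is then
bounded by `exp(|ι| C / (1 - q))` uniformly in `n` and `k`.
-/

open Finset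

section

variable {ι A : Type*} [NormedRing A]

def ExpDominated (lam : ι → ι → ℝ) (t c : ℝ) (M : Matrix ι ι A) : Prop :=
  ∀ α β, ‖M α β‖ ≤ c * Real.exp (-t * lam α β)

namespace ExpDominated

variable {lam : ι → ι → ℝ} {t a b : ℝ} {M N : Matrix ι ι A}

theorem nonneg (h : ExpDominated lam t a M) (α β : ι) : 0 ≤ a :=
  nonneg_of_mul_nonneg_left ((norm_nonneg _).trans (h α β)) (Real.exp_pos _)

theorem mono (h : ExpDominated lam t a M) (hab : a ≤ b) : ExpDominated lam t b M :=
  fun α β => (h α β).trans (mul_le_mul_of_nonneg_right hab (Real.exp_pos _).le)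

theorem zero : ExpDominated lam t 0 (0 : Matrix ι ι A) := fun α β => by simp

theorem add (hM : ExpDominated lam t a M) (hN : ExpDominated lam t b N) :
    ExpDominated lam t (a + b) (M + N) := fun α β =>
  calc ‖(M + N) α β‖ ≤ ‖M α β‖ + ‖N α β‖ := norm_add_le _ _
    _ ≤ (a + b) * Real.exp (-t * lam α β) := by rw [add_mul]; exact add_le_add (hM α β) (hN α β)

theorem mul [Fintype ι] (htri : ∀ α β γ, lam α γ ≤ lam α β + lam β γ) (ht : 0 ≤ t)
    (hM : ExpDominated lam t a M) (hN : ExpDominated lam t b N) :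
    ExpDominated lam t (Fintype.card ι * (a * b)) (M * N) := by
  intro α β
  have hterm (γ : ι) : ‖M α γ * N γ β‖ ≤ a * b * Real.exp (-t * lam α β) := by
    have hab : 0 ≤ a * b := mul_nonneg (hM.nonneg α γ) (hN.nonneg γ β)
    have hexp : Real.exp (-t * lam α γ) * Real.exp (-t * lam γ β) ≤ Real.exp (-t * lam α β) := by
      rw [← Real.exp_add, Real.exp_le_exp]
      nlinarith [htri α γ β]
    calc ‖M α γ * N γ β‖ ≤ ‖M α γ‖ * ‖N γ β‖ := norm_mul_le _ _
      _ ≤ (a * Real.exp (-t * lam α γ)) * (b * Real.exp (-t * lam γ β)) :=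
        mul_le_mul (hM α γ) (hN γ β) (norm_nonneg _) ((norm_nonneg _).trans (hM α γ))
      _ = a * b * (Real.exp (-t * lam α γ) * Real.exp (-t * lam γ β)) := by ring
      _ ≤ a * b * Real.exp (-t * lam α β) := mul_le_mul_of_nonneg_left hexp hab
  calc ‖(M * N) α β‖ ≤ ∑ γ, ‖M α γ * N γ β‖ := norm_sum_le _ _
    _ ≤ ∑ _γ : ι, a * b * Real.exp (-t * lam α β) := sum_le_sum fun γ _ => hterm γ
    _ = Fintype.card ι * (a * b) * Real.exp (-t * lam α β) := by simp [mul_assoc]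

theorem list_prod_one_add_sub_one [Fintype ι] [DecidableEq ι] [Nonempty ι]
    (htri : ∀ α β γ, lam α γ ≤ lam α β + lam β γ) (ht : 0 ≤ t)
    {X : ℕ → Matrix ι ι A} {c : ℕ → ℝ} (hX : ∀ j, ExpDominated lam t (c j) (X j)) (k : ℕ) :
    ExpDominated lam t (∏ j ∈ range k, (1 + Fintype.card ι * c j) - 1)
      (((List.range k).map fun j => 1 + X j).prod - 1) := by
  induction k with
  | zero => simpa using zero
  | succ k ih =>
    set P := ((List.range k).map fun j => 1 + X j).prod - 1
    have hsplit : ((List.range (k + 1)).map fun j => 1 + X j).prod - 1 = P + X k + P * X k := by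
      rw [List.range_succ, List.map_append, List.prod_append, List.map_singleton,
        List.prod_singleton, show ((List.range k).map fun j => 1 + X j).prod = 1 + P by
          simp only [P, add_sub_cancel]]
      noncomm_ring
    have hcard : (1 : ℝ) ≤ Fintype.card ι := Nat.one_le_cast.2 Fintype.card_pos
    have hc := (hX k).nonneg (Classical.arbitrary ι) (Classical.arbitrary ι)
    have hp := ih.nonneg (Classical.arbitrary ι) (Classical.arbitrary ι)
    rw [hsplit, prod_range_succ]
    refine ((ih.add (hX k)).add (ih.mul htri ht (hX k))).mono ?_
    nlinarith

end ExpDominated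

end

theorem prod_one_add_mul_geom_le_exp {a q : ℝ} (ha : 0 ≤ a) (hq0 : 0 ≤ q) (hq1 : q < 1) (k : ℕ) :
    ∏ j ∈ range k, (1 + a * q ^ j) ≤ Real.exp (a * (1 - q)⁻¹) := by
  refine (Real.prod_one_add_le_exp_sum _ fun j => mul_nonneg ha (pow_nonneg hq0 j)).trans
    (Real.exp_le_exp.2 ?_)
  rw [← Finset.mul_sum]
  have hgeom : ∑ j ∈ range k, q ^ j ≤ (1 - q)⁻¹ := by
    have h := geom_sum_Ico_le_of_lt_one (m := 0) (n := k) hq0 hq1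
    rwa [← range_eq_Ico, pow_zero, one_div] at h
  exact mul_le_mul_of_nonneg_left hgeom ha

theorem exp_neg_add_mul_le {l l₀ : ℝ} (hl : l₀ ≤ l) (n j : ℕ) :
    Real.exp (-((n + j : ℕ) : ℝ) * l) ≤ Real.exp (-l₀) ^ j * Real.exp (-(n : ℝ) * l) := by
  rw [← Real.exp_nat_mul, ← Real.exp_add, Real.exp_le_exp]
  have hj : (0 : ℝ) ≤ j := j.cast_nonneg
  push_cast
  nlinarith

/-- uniform multi-exponential bound on matrix products: let `ι` be a
nonempty finite index type, `A` a normed ring, and `λ : ι → ι → ℝ` bounded below by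
`λ₀ > 0` and satisfying the triangle inequality `λ(α,γ) ≤ λ(α,β) + λ(β,γ)`. If the
matrices `E_n` (for `n ≥ 1`) satisfy `‖(E_n)_{α,β}‖ ≤ C·exp(−n·λ(α,β))`, then the
matrices `F_{n,k}` defined by `1 + F_{n,k} = (1+E_n)(1+E_{n+1})⋯(1+E_{n+k})` satisfy
`‖(F_{n,k})_{α,β}‖ ≤ C'·exp(−n·λ(α,β))` for a constant `C'` independent of `n` and `k`. -/
theorem stmt_13 {ι : Type*} [Fintype ι] [Nonempty ι] [DecidableEq ι]
    {A : Type*} [NormedRing A]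
    (lam : ι → ι → ℝ) (lam0 : ℝ) (hlam0 : 0 < lam0)
    (hlb : ∀ α β, lam0 ≤ lam α β)
    (htri : ∀ α β γ, lam α γ ≤ lam α β + lam β γ)
    (C : ℝ) (hC : 0 ≤ C) (E : ℕ → Matrix ι ι A)
    (hE : ∀ n, 1 ≤ n → ∀ α β, ‖E n α β‖ ≤ C * Real.exp (-(n : ℝ) * lam α β)) :
    ∃ C' : ℝ, 0 ≤ C' ∧ ∀ n, 1 ≤ n → ∀ k : ℕ, ∀ α β,
      ‖((((List.range (k + 1)).map fun j => (1 : Matrix ι ι A) + E (n + j)).prod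
          - 1) : Matrix ι ι A) α β‖ ≤ C' * Real.exp (-(n : ℝ) * lam α β) := by
  set q := Real.exp (-lam0)
  have hq1 : q < 1 := Real.exp_lt_one_iff.2 (neg_neg_of_pos hlam0)
  have hNC : 0 ≤ Fintype.card ι * C := by positivity
  refine ⟨Real.exp (Fintype.card ι * C * (1 - q)⁻¹), (Real.exp_pos _).le,
    fun n hn k => ?_⟩
  have hshift (j : ℕ) : ExpDominated lam n (C * q ^ j) (E (n + j)) := fun α β =>
    calc ‖E (n + j) α β‖ ≤ C * Real.exp (-((n + j : ℕ) : ℝ) * lam α β) := hE _ (by omega) α β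
      _ ≤ C * (q ^ j * Real.exp (-(n : ℝ) * lam α β)) :=
        mul_le_mul_of_nonneg_left (exp_neg_add_mul_le (hlb α β) n j) hC
      _ = C * q ^ j * Real.exp (-(n : ℝ) * lam α β) := by ring
  refine (ExpDominated.list_prod_one_add_sub_one htri n.cast_nonneg hshift (k + 1)).mono ?_
  simp_rw [← mul_assoc]
  linarith [prod_one_add_mul_geom_le_exp hNC (Real.exp_pos _).le hq1 (k + 1)]
end

section
/- Let Z be a topological space in which bounded continuous real-valued functions separate points (i.e., for any two distinct points x, y ∈ Z there is a bounded continuous u : Z → ℝ with u(x) ≠ u(y)), and let φ : ℝ × Z → Z be a continuous flow. Let x ∈ Z be a point whose orbit is nontrivial, i.e. φ(t₀, x) ≠ x for some t₀ ∈ ℝ. Then there exist continuous functions F, G : Z → ℝ such that for every z ∈ Z the map s ↦ F(φ(s, z)) is differentiable at every t ∈ ℝ with derivative G(φ(t, z)), and such that G(x) ≠ 0. -/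
/-!
Choose a continuous `u` with `u (φ t₀ x) ≠ u x` and average it along the flow:
`F z = ∫₀^{t₀} u (φ s z) ds`. Along an orbit, `F (φ s z) = ∫ₛ^{s+t₀} u (φ r z) dr`, so the
fundamental theorem of calculus gives the derivative `G = u ∘ φ t₀ - u`, which does not
vanish at `x`.
-/

open intervalIntegral

section

variable {E : Type*} [NormedAddCommGroup E] [NormedSpace ℝ E]

theorem Continuous.hasDerivAt_intervalIntegral_add_const [CompleteSpace E] {g : ℝ → E}
    (hg : Continuous g) (τ t : ℝ) :
    HasDerivAt (fun s => ∫ r in s..s + τ, g r) (g (t + τ) - g t) t := by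
  have hsplit : (fun s => ∫ r in s..s + τ, g r)
      = fun s => (∫ r in (0 : ℝ)..s + τ, g r) - ∫ r in (0 : ℝ)..s, g r := by
    funext s
    exact (integral_interval_sub_left (hg.intervalIntegrable _ _)
      (hg.intervalIntegrable _ _)).symm
  rw [hsplit]
  exact ((hg.integral_hasStrictDerivAt 0 (t + τ)).hasDerivAt.comp_add_const t τ).sub
    (hg.integral_hasStrictDerivAt 0 t).hasDerivAt

namespace Flow

variable {Z : Type*} [TopologicalSpace Z] (φ : Flow ℝ Z) {u : Z → E}

theorem continuous_intervalIntegral_comp (hu : Continuous u) (a b : ℝ) :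
    Continuous fun z => ∫ s in a..b, u (φ s z) :=
  continuous_parametric_intervalIntegral_of_continuous'
    (f := fun z s => u (φ s z)) (by fun_prop) a b

theorem intervalIntegral_comp_map (u : Z → E) (a b s : ℝ) (z : Z) :
    ∫ r in a..b, u (φ r (φ s z)) = ∫ r in a + s..b + s, u (φ r z) := by
  simp_rw [← φ.map_add]
  exact integral_comp_add_right (fun r => u (φ r z)) s

theorem hasDerivAt_intervalIntegral_comp [CompleteSpace E] (hu : Continuous u) (τ : ℝ) (z : Z)
    (t : ℝ) :
    HasDerivAt (fun s => ∫ r in (0 : ℝ)..τ, u (φ r (φ s z)))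
      (u (φ τ (φ t z)) - u (φ t z)) t := by
  simp_rw [φ.intervalIntegral_comp_map, zero_add, ← φ.map_add τ t, add_comm τ]
  have hcont : Continuous fun r => u (φ r z) := by fun_prop
  exact hcont.hasDerivAt_intervalIntegral_add_const τ t

end Flow

end

/-- existence of a `C¹`-along-the-flow function with nonvanishing
derivative at a point with nontrivial orbit: let `Z` be a topological space in which
bounded continuous real functions separate points and `φ` a continuous flow on `Z`.
If `x ∈ Z` satisfies `φ(t₀, x) ≠ x` for some `t₀`, then there exist continuous
`F, G : Z → ℝ` such that `s ↦ F(φ(s,z))` has derivative `G(φ(t,z))` at every `t` for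
every `z`, and `G(x) ≠ 0`. -/
theorem stmt_16 {Z : Type*} [TopologicalSpace Z]
    (hsep : ∀ x y : Z, x ≠ y →
      ∃ u : Z → ℝ, Continuous u ∧ (∃ C : ℝ, ∀ z, |u z| ≤ C) ∧ u x ≠ u y)
    (φ : Flow ℝ Z) (x : Z) (t₀ : ℝ) (hx : φ t₀ x ≠ x) :
    ∃ F G : Z → ℝ, Continuous F ∧ Continuous G ∧
      (∀ (z : Z) (t : ℝ), HasDerivAt (fun s : ℝ => F (φ s z)) (G (φ t z)) t) ∧
      G x ≠ 0 := by
  obtain ⟨u, hu, -, hux⟩ := hsep (φ t₀ x) x hx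
  exact ⟨fun z => ∫ s in (0 : ℝ)..t₀, u (φ s z), fun z => u (φ t₀ z) - u z,
    φ.continuous_intervalIntegral_comp hu 0 t₀, by fun_prop,
    φ.hasDerivAt_intervalIntegral_comp hu t₀, sub_ne_zero_of_ne hux⟩
end

section
/- Let Γ be a countable group acting on ℝ by strictly increasing bijections, via a homomorphism ρ from Γ to the group of increasing bijections of ℝ, and let m_Γ be a probability measure on Γ such that for every x ∈ ℝ the function γ ↦ ρ(γ)(x) is m_Γ-integrable (Σ_γ |ρ(γ)(x)|·m_Γ(γ) < ∞) and satisfies the harmonicity condition Σ_{γ∈Γ} ρ(γ)(x)·m_Γ(γ) = x. Equip Ω := Γ^ℕ with the product measure m_Γ^⊗ℕ and for ω = (g_1, g_2, …) ∈ Ω set l_n(ω) := g_n·g_{n−1}⋯g_1. Then for every pair of real numbers x ≤ y, for m_Γ^⊗ℕ-almost every ω the sequence of nonnegative numbers n ↦ ρ(l_n(ω))(y) − ρ(l_n(ω))(x) converges to a finite limit as n → ∞. -/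
/-!
For `x ≤ y` the function `φ δ = ρ δ y - ρ δ x` is nonnegative and `m`-harmonic for the left
random walk: `ρ (γ * δ) = ρ γ ∘ ρ δ`, so integrating the harmonicity condition at the points
`ρ δ y` and `ρ δ x` gives `∫ φ (γ * δ) dm(γ) = φ δ`. Since the step `g n` is independent of the
past and has law `m`, `φ (l_n)` is a nonnegative martingale; its `L¹` norm is constant, equal to
`φ 1 = y - x`, so Doob's convergence theorem gives almost sure convergence. The martingale
property is computed with lower integrals, which yields the integrability of `φ (l_n)` along the
way.
-/

open MeasureTheory ProbabilityTheory Filter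
open scoped ENNReal

theorem lintegral_apply_eq_lintegral_lintegral_map_of_indep {Ω Γ : Type*}
    [Countable Γ] [MeasurableSpace Γ] [MeasurableSingletonClass Γ]
    {F mΩ : MeasurableSpace Ω} {P : Measure Ω} (hF : F ≤ mΩ) {X : Ω → Γ}
    (hX : Measurable X) (hXF : Indep (MeasurableSpace.comap X inferInstance) F P)
    {h : Γ → Ω → ℝ≥0∞} (hh : ∀ γ, Measurable[F] (h γ)) :
    ∫⁻ ω, h (X ω) ω ∂P = ∫⁻ ω, ∫⁻ γ, h γ ω ∂(P.map X) ∂P := by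
  -- split along the countably many values of `X`; on each `{X = γ}` independence factorises
  set ind : Γ → Ω → ℝ≥0∞ := fun γ ω => ({γ} : Set Γ).indicator 1 (X ω)
  have hind : ∀ γ, Measurable[MeasurableSpace.comap X inferInstance] (ind γ) := fun γ =>
    (measurable_of_countable (({γ} : Set Γ).indicator 1)).comp (comap_measurable X)
  have hdecomp : ∀ ω, h (X ω) ω = ∑' γ, ind γ ω * h γ ω := by
    intro ω
    rw [tsum_eq_single (X ω) fun γ hγ => by simp [ind, Ne.symm hγ]]
    simp [ind]
  calc ∫⁻ ω, h (X ω) ω ∂P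
      = ∑' γ, ∫⁻ ω, ind γ ω * h γ ω ∂P := by
        simp_rw [hdecomp]
        exact lintegral_tsum fun γ =>
          (((hind γ).mono hX.comap_le le_rfl).mul ((hh γ).mono hF le_rfl)).aemeasurable
    _ = ∑' γ, (∫⁻ ω, h γ ω ∂P) * P.map X {γ} := by
        congr 1 with γ
        rw [lintegral_mul_eq_lintegral_mul_lintegral_of_independent_measurableSpace
          hX.comap_le hF hXF (hind γ) (hh γ), mul_comm]
        congr 1
        rw [← lintegral_indicator_one (measurableSet_singleton γ),
          lintegral_map (measurable_of_countable _) hX]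
    _ = ∫⁻ ω, ∫⁻ γ, h γ ω ∂(P.map X) ∂P := by
        simp_rw [lintegral_countable']
        rw [lintegral_tsum fun γ => ((hh γ).mono hF le_rfl).aemeasurable.mul_const _]
        simp_rw [lintegral_mul_const _ ((hh _).mono hF le_rfl)]

section LeftRandomWalk

variable {Ω Γ : Type*} [Monoid Γ] {g : ℕ → Ω → Γ}

def leftRandomWalk (g : ℕ → Ω → Γ) (n : ℕ) (ω : Ω) : Γ :=
  ((List.range n).reverse.map fun i => g i ω).prod

@[simp]
lemma leftRandomWalk_zero (ω : Ω) : leftRandomWalk g 0 ω = 1 := rfl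

lemma leftRandomWalk_succ (n : ℕ) (ω : Ω) :
    leftRandomWalk g (n + 1) ω = g n ω * leftRandomWalk g n ω := by
  simp [leftRandomWalk, List.range_succ]

end LeftRandomWalk

section PastFiltration

variable {Ω Γ : Type*} [MeasurableSpace Ω] [MeasurableSpace Γ] {g : ℕ → Ω → Γ}

def pastFiltration (hg : ∀ n, Measurable (g n)) : Filtration ℕ ‹MeasurableSpace Ω› where
  seq n := ⨆ i ∈ Set.Iio n, MeasurableSpace.comap (g i) inferInstance
  mono' _ _ hab := biSup_mono fun _ hi => lt_of_lt_of_le hi hab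
  le' _ := iSup₂_le fun i _ => (hg i).comap_le

variable (hg : ∀ n, Measurable (g n))

lemma measurable_pastFiltration {i n : ℕ} (hin : i < n) :
    Measurable[pastFiltration hg n] (g i) :=
  measurable_iff_comap_le.2 <|
    le_biSup (fun i => MeasurableSpace.comap (g i) inferInstance) (Set.mem_Iio.2 hin)

lemma indep_comap_pastFiltration {P : Measure Ω} (hindep : iIndepFun g P) (n : ℕ) :
    Indep (MeasurableSpace.comap (g n) inferInstance) (pastFiltration hg n) P := by
  have h := indep_iSup_of_disjoint (fun i => (hg i).comap_le) hindep.iIndep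
    (S := {n}) (T := Set.Iio n) (by simp)
  rwa [iSup_singleton] at h

lemma measurable_leftRandomWalk [Monoid Γ] [Countable Γ] [MeasurableSingletonClass Γ] (n : ℕ) :
    Measurable[pastFiltration hg n] (leftRandomWalk g n) := by
  induction n with
  | zero => exact measurable_const
  | succ n ih =>
    have hstep : leftRandomWalk g (n + 1) =
        (fun p : Γ × Γ => p.1 * p.2) ∘ fun ω => (g n ω, leftRandomWalk g n ω) :=
      funext (leftRandomWalk_succ n)
    rw [hstep]
    exact (measurable_of_countable _).comp ((measurable_pastFiltration hg n.lt_succ_self).prodMk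
      (ih.mono ((pastFiltration hg).mono n.le_succ) le_rfl))

end PastFiltration

section HarmonicFunction

variable {Ω Γ : Type*} [MeasurableSpace Ω] [Monoid Γ] [MeasurableSpace Γ] {m : Measure Γ}
  {P : Measure Ω} {g : ℕ → Ω → Γ}

def IsHarmonic (m : Measure Γ) (φ : Γ → ℝ) : Prop :=
  ∀ δ, Integrable (fun γ => φ (γ * δ)) m ∧ ∫ γ, φ (γ * δ) ∂m = φ δ

lemma IsHarmonic.lintegral_ofReal {φ : Γ → ℝ} (hφ : IsHarmonic m φ) (hφ0 : 0 ≤ φ) (δ : Γ) :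
    ∫⁻ γ, ENNReal.ofReal (φ (γ * δ)) ∂m = ENNReal.ofReal (φ δ) := by
  rw [← ofReal_integral_eq_lintegral_ofReal (hφ δ).1 (Eventually.of_forall fun γ => hφ0 (γ * δ)),
    (hφ δ).2]

lemma isHarmonic_apply_sub_apply (ρ : Γ →* (ℝ ≃o ℝ))
    (hint : ∀ x : ℝ, Integrable (fun γ => ρ γ x) m) (hharm : ∀ x : ℝ, (∫ γ, ρ γ x ∂m) = x)
    (x y : ℝ) : IsHarmonic m fun δ => ρ δ y - ρ δ x := by
  intro δ
  have hmul (γ : Γ) (z : ℝ) : ρ (γ * δ) z = ρ γ (ρ δ z) := by rw [map_mul, RelIso.mul_apply]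
  simp only [hmul]
  exact ⟨(hint _).sub (hint _), by rw [integral_sub (hint _) (hint _), hharm, hharm]⟩

variable [Countable Γ] [MeasurableSingletonClass Γ]

lemma setLIntegral_leftRandomWalk_succ (hg : ∀ n, Measurable (g n)) (hindep : iIndepFun g P)
    (hdist : ∀ n, P.map (g n) = m) {φ : Γ → ℝ≥0∞} (hφ : ∀ δ, ∫⁻ γ, φ (γ * δ) ∂m = φ δ)
    {n : ℕ} {A : Set Ω} (hA : MeasurableSet[pastFiltration hg n] A) :
    ∫⁻ ω in A, φ (leftRandomWalk g (n + 1) ω) ∂P = ∫⁻ ω in A, φ (leftRandomWalk g n ω) ∂P := by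
  have hfubini := lintegral_apply_eq_lintegral_lintegral_map_of_indep
    ((pastFiltration hg).le n) (hg n) (indep_comap_pastFiltration hg hindep n)
    (h := fun γ => A.indicator fun ω => φ (γ * leftRandomWalk g n ω))
    fun γ => ((measurable_of_countable fun δ => φ (γ * δ)).comp
      (measurable_leftRandomWalk hg n)).indicator hA
  have hAmeas := (pastFiltration hg).le n A hA
  rw [← lintegral_indicator hAmeas, ← lintegral_indicator hAmeas]
  calc ∫⁻ ω, A.indicator (fun ω => φ (leftRandomWalk g (n + 1) ω)) ω ∂P
      = ∫⁻ ω, A.indicator (fun ω' => φ (g n ω * leftRandomWalk g n ω')) ω ∂P :=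
        lintegral_congr fun ω => by
          by_cases hω : ω ∈ A <;> simp [hω, leftRandomWalk_succ]
    _ = ∫⁻ ω, ∫⁻ γ, A.indicator (fun ω' => φ (γ * leftRandomWalk g n ω')) ω ∂m ∂P := by
        rw [hfubini, hdist]
    _ = ∫⁻ ω, A.indicator (fun ω => φ (leftRandomWalk g n ω)) ω ∂P :=
        lintegral_congr fun ω => by by_cases hω : ω ∈ A <;> simp [hω, hφ]

variable [IsProbabilityMeasure P]

lemma lintegral_leftRandomWalk (hg : ∀ n, Measurable (g n)) (hindep : iIndepFun g P)
    (hdist : ∀ n, P.map (g n) = m) {φ : Γ → ℝ≥0∞} (hφ : ∀ δ, ∫⁻ γ, φ (γ * δ) ∂m = φ δ)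
    (n : ℕ) : ∫⁻ ω, φ (leftRandomWalk g n ω) ∂P = φ 1 := by
  induction n with
  | zero => simp
  | succ n ih =>
    simpa [ih] using setLIntegral_leftRandomWalk_succ hg hindep hdist hφ
      (n := n) MeasurableSet.univ

lemma IsHarmonic.martingale_leftRandomWalk {φ : Γ → ℝ} (hφ : IsHarmonic m φ) (hφ0 : 0 ≤ φ)
    (hg : ∀ n, Measurable (g n)) (hindep : iIndepFun g P) (hdist : ∀ n, P.map (g n) = m) :
    Martingale (fun n ω => φ (leftRandomWalk g n ω)) (pastFiltration hg) P := by
  have hψ := hφ.lintegral_ofReal hφ0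
  have hnonneg n : ∀ ω, 0 ≤ φ (leftRandomWalk g n ω) := fun ω => hφ0 _
  have hadapted : StronglyAdapted (pastFiltration hg) fun n ω => φ (leftRandomWalk g n ω) :=
    fun n => ((measurable_of_countable φ).comp (measurable_leftRandomWalk hg n)).stronglyMeasurable
  have hmeas n : AEStronglyMeasurable (fun ω => φ (leftRandomWalk g n ω)) P :=
    ((hadapted n).mono ((pastFiltration hg).le n)).aestronglyMeasurable
  have hint n : Integrable (fun ω => φ (leftRandomWalk g n ω)) P := by
    refine ⟨hmeas n, ?_⟩
    rw [hasFiniteIntegral_iff_ofReal (Eventually.of_forall (hnonneg n)),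
      lintegral_leftRandomWalk hg hindep hdist (φ := fun δ => ENNReal.ofReal (φ δ)) hψ]
    exact ENNReal.ofReal_lt_top
  refine martingale_of_setIntegral_eq_succ hadapted hint fun n A hA => ?_
  rw [integral_eq_lintegral_of_nonneg_ae (Eventually.of_forall (hnonneg n)) (hmeas n).restrict,
    integral_eq_lintegral_of_nonneg_ae (Eventually.of_forall (hnonneg (n + 1)))
      (hmeas (n + 1)).restrict,
    setLIntegral_leftRandomWalk_succ hg hindep hdist (φ := fun δ => ENNReal.ofReal (φ δ)) hψ hA]

lemma IsHarmonic.eLpNorm_leftRandomWalk {φ : Γ → ℝ} (hφ : IsHarmonic m φ) (hφ0 : 0 ≤ φ)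
    (hg : ∀ n, Measurable (g n)) (hindep : iIndepFun g P) (hdist : ∀ n, P.map (g n) = m)
    (n : ℕ) : eLpNorm (fun ω => φ (leftRandomWalk g n ω)) 1 P = ENNReal.ofReal (φ 1) := by
  rw [eLpNorm_one_eq_lintegral_enorm]
  simp_rw [Real.enorm_eq_ofReal (hφ0 _)]
  exact lintegral_leftRandomWalk hg hindep hdist (φ := fun δ => ENNReal.ofReal (φ δ))
    (hφ.lintegral_ofReal hφ0) n

theorem IsHarmonic.ae_tendsto_leftRandomWalk {φ : Γ → ℝ} (hφ : IsHarmonic m φ) (hφ0 : 0 ≤ φ)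
    (hg : ∀ n, Measurable (g n)) (hindep : iIndepFun g P) (hdist : ∀ n, P.map (g n) = m) :
    ∀ᵐ ω ∂P, ∃ c, Tendsto (fun n => φ (leftRandomWalk g n ω)) atTop (nhds c) :=
  (hφ.martingale_leftRandomWalk hφ0 hg hindep hdist).submartingale.exists_ae_tendsto_of_bdd
    (R := (φ 1).toNNReal) fun n => (hφ.eLpNorm_leftRandomWalk hφ0 hg hindep hdist n).le

end HarmonicFunction

theorem stmt_17_general {Γ : Type*} [Group Γ] [Countable Γ] [MeasurableSpace Γ]
    [MeasurableSingletonClass Γ]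
    (ρ : Γ →* (ℝ ≃o ℝ))
    (m : Measure Γ)
    (hint : ∀ x : ℝ, Integrable (fun γ => ρ γ x) m)
    (hharm : ∀ x : ℝ, (∫ γ, ρ γ x ∂m) = x)
    {Ω : Type*} [MeasurableSpace Ω] (P : Measure Ω) [IsProbabilityMeasure P]
    (g : ℕ → Ω → Γ) (hgmeas : ∀ n, Measurable (g n))
    (hindep : ProbabilityTheory.iIndepFun g P)
    (hdist : ∀ n, P.map (g n) = m)
    (x y : ℝ) (hxy : x ≤ y) :
    ∀ᵐ ω ∂P, ∃ c : ℝ,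
      Filter.Tendsto
        (fun n : ℕ =>
          ρ (((List.range n).reverse.map fun i => g i ω).prod) y -
            ρ (((List.range n).reverse.map fun i => g i ω).prod) x)
        Filter.atTop (nhds c) :=
  (isHarmonic_apply_sub_apply ρ hint hharm x y).ae_tendsto_leftRandomWalk
    (fun δ => sub_nonneg.2 ((ρ δ).monotone hxy)) hgmeas hindep hdist

/-- martingale convergence of interval lengths under a harmonic random
walk: let `Γ` be a countable group acting on `ℝ` by strictly increasing bijections
(order automorphisms) via a homomorphism `ρ`, and let `m` be a probability measure on
`Γ` such that for every `x ∈ ℝ` the function `γ ↦ ρ(γ)(x)` is integrable and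
`∫ ρ(γ)(x) dm(γ) = x`. If `(g_n)` is an i.i.d. sequence with common distribution `m`
(`Ω` with the product measure is the law of such a sequence) and
`l_n = g_{n}·g_{n-1}⋯g_1`, then for all `x ≤ y`, almost surely the nonnegative sequence
`n ↦ ρ(l_n)(y) − ρ(l_n)(x)` converges to a finite limit. -/
theorem stmt_17 {Γ : Type*} [Group Γ] [Countable Γ] [MeasurableSpace Γ]
    [MeasurableSingletonClass Γ]
    (ρ : Γ →* (ℝ ≃o ℝ))
    (m : Measure Γ) [IsProbabilityMeasure m]
    (hint : ∀ x : ℝ, Integrable (fun γ => ρ γ x) m)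
    (hharm : ∀ x : ℝ, (∫ γ, ρ γ x ∂m) = x)
    {Ω : Type*} [MeasurableSpace Ω] (P : Measure Ω) [IsProbabilityMeasure P]
    (g : ℕ → Ω → Γ) (hgmeas : ∀ n, Measurable (g n))
    (hindep : ProbabilityTheory.iIndepFun g P)
    (hdist : ∀ n, P.map (g n) = m)
    (x y : ℝ) (hxy : x ≤ y) :
    ∀ᵐ ω ∂P, ∃ c : ℝ,
      Filter.Tendsto
        (fun n : ℕ =>
          ρ (((List.range n).reverse.map fun i => g i ω).prod) y -
            ρ (((List.range n).reverse.map fun i => g i ω).prod) x)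
        Filter.atTop (nhds c) :=
  stmt_17_general ρ m hint hharm P g hgmeas hindep hdist x y hxy
end
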